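/- Let $\Delta_1, \Delta_2$ be positive self-adjoint operators on Hilbert spaces $H_1, H_2$ and $T : H_1 \to H_2$ a contraction with $T^*\Delta_2 T \le \Delta_1$. Then for every $0 \le r \le 1$, $T^* \Delta_2^r T \le \Delta_1^r$. -/

import Mathlib

/-!
For `t > 0` the quadratic form of `g_t(A) = t⁻¹ - (t + A)⁻¹` is an infimal convolution:
`t² ⟪g_t(A) ζ, ζ⟫ = min_η (⟪A η, η⟫ + t ‖ζ - η‖²)`, the minimum being attained at
`η = t (t + A)⁻¹ ζ`. Evaluating the formula for `Δ₂` at `T ξ` against the image `T η` of the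
minimiser for `Δ₁` at `ξ`, the hypothesis and `‖T‖ ≤ 1` give `T* g_t(Δ₂) T ≤ g_t(Δ₁)` for every
`t > 0`. For `0 < r < 1` the function `x ^ r` is a positive mixture of the `g_t`,
`x ^ r = ∫ t ^ r g_t(x) dμ(t)`, and the functional calculus carries this representation over to
operators, so the inequality integrates to `T* Δ₂ ^ r T ≤ Δ₁ ^ r`.
-/

open scoped InnerProductSpace
open MeasureTheory Set Real

section Variational

variable {K : Type*} [NormedAddCommGroup K] [InnerProductSpace ℂ K]

lemma re_inner_real_smul_left (c : ℝ) (u v : K) :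
    RCLike.re ⟪c • u, v⟫_ℂ = c * RCLike.re ⟪u, v⟫_ℂ := by
  rw [RCLike.real_smul_eq_coe_smul (K := ℂ), inner_smul_real_left, RCLike.smul_re]

lemma re_inner_map_add_norm_sub_sq_eq {A : K →L[ℂ] K} (hA : (A : K →ₗ[ℂ] K).IsSymmetric)
    {t : ℝ} {u v : K} (hu : A u = t • v) (δ : K) :
    RCLike.re ⟪A (u + δ), u + δ⟫_ℂ + t * ‖u + v - (u + δ)‖ ^ 2 =
      t * RCLike.re ⟪v, u + v⟫_ℂ + RCLike.re ⟪A δ, δ⟫_ℂ + t * ‖δ‖ ^ 2 := by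
  have hsymm : RCLike.re ⟪A δ, u⟫_ℂ = t * RCLike.re ⟪v, δ⟫_ℂ := by
    rw [← ContinuousLinearMap.coe_coe A, hA, ContinuousLinearMap.coe_coe, hu, inner_re_symm,
      re_inner_real_smul_left]
  rw [add_sub_add_left_eq_sub, map_add, hu, ← inner_self_eq_norm_sq (𝕜 := ℂ),
    ← inner_self_eq_norm_sq (𝕜 := ℂ)]
  simp only [inner_add_left, inner_add_right, inner_sub_left, inner_sub_right, map_add, map_sub,
    re_inner_real_smul_left, hsymm, inner_re_symm δ v]
  ring

lemma isLeast_re_inner_map_add_norm_sub_sq {A : K →L[ℂ] K} (hA : A.IsPositive) {t : ℝ}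
    (ht : 0 ≤ t) {u v : K} (hu : A u = t • v) :
    IsLeast (range fun η => RCLike.re ⟪A η, η⟫_ℂ + t * ‖u + v - η‖ ^ 2)
      (t * RCLike.re ⟪v, u + v⟫_ℂ) := by
  refine ⟨⟨u, by simpa using re_inner_map_add_norm_sub_sq_eq hA.isSymmetric hu 0⟩, ?_⟩
  rintro _ ⟨η, rfl⟩
  have hsq := re_inner_map_add_norm_sub_sq_eq hA.isSymmetric hu (η - u)
  rw [add_sub_cancel] at hsq
  dsimp only
  rw [hsq]
  linarith [hA.re_inner_nonneg_left (η - u), mul_nonneg ht (sq_nonneg ‖η - u‖)]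

variable [CompleteSpace K]

lemma add_ne_zero_of_mem_spectrum {A : K →L[ℂ] K} (hA : A.IsPositive) {t : ℝ} (ht : 0 < t)
    {x : ℝ} (hx : x ∈ spectrum ℝ A) : t + x ≠ 0 :=
  (add_pos_of_pos_of_nonneg ht
    (spectrum_nonneg_of_nonneg (A.nonneg_iff_isPositive.mpr hA) hx)).ne'

lemma isLeast_re_inner_cfc_inv_sub_inv {A : K →L[ℂ] K} (hA : A.IsPositive) {t : ℝ} (ht : 0 < t)
    (ζ : K) :
    IsLeast (range fun η => RCLike.re ⟪A η, η⟫_ℂ + t * ‖ζ - η‖ ^ 2)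
      (t ^ 2 * RCLike.re ⟪cfc (fun x : ℝ => t⁻¹ - (t + x)⁻¹) A ζ, ζ⟫_ℂ) := by
  have hpos := fun x (hx : x ∈ spectrum ℝ A) => add_ne_zero_of_mem_spectrum hA ht hx
  have hinv : ContinuousOn (fun x : ℝ => (t + x)⁻¹) (spectrum ℝ A) :=
    (continuousOn_const.add continuousOn_id).inv₀ hpos
  have hEc : ContinuousOn (fun x : ℝ => t * (t + x)⁻¹) (spectrum ℝ A) :=
    continuousOn_const.mul hinv
  have hGc : ContinuousOn (fun x : ℝ => t⁻¹ - (t + x)⁻¹) (spectrum ℝ A) :=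
    continuousOn_const.sub hinv
  have htGc : ContinuousOn (fun x : ℝ => t * (t⁻¹ - (t + x)⁻¹)) (spectrum ℝ A) :=
    continuousOn_const.mul hGc
  have hsum : cfc (fun x : ℝ => t * (t + x)⁻¹) A + t • cfc (fun x : ℝ => t⁻¹ - (t + x)⁻¹) A
      = 1 := by
    rw [← cfc_const_mul t _ A hGc, ← cfc_add A _ _ hEc htGc, ← cfc_one ℝ A hA.isSelfAdjoint]
    refine cfc_congr fun x hx => ?_
    rw [Pi.one_apply]
    field_simp [hpos x hx]
    ring
  have hAE : A * cfc (fun x : ℝ => t * (t + x)⁻¹) A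
      = t • t • cfc (fun x : ℝ => t⁻¹ - (t + x)⁻¹) A := by
    rw [← cfc_const_mul t _ A hGc, ← cfc_const_mul t _ A htGc]
    nth_rewrite 1 [← cfc_id' ℝ A hA.isSelfAdjoint]
    rw [← cfc_mul _ _ A (continuousOn_id' _) hEc]
    refine cfc_congr fun x hx => ?_
    field_simp [hpos x hx]
    ring
  have hζ := congrArg (· ζ) hsum
  have hu := congrArg (· ζ) hAE
  simp only [add_apply, smul_apply, one_apply_eq_self, mul_apply_eq_comp] at hζ hu
  have hleast := isLeast_re_inner_map_add_norm_sub_sq hA ht.le hu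
  rwa [hζ, re_inner_real_smul_left, ← mul_assoc, ← sq] at hleast

lemma cfc_rpowIntegrand₀₁_eq_smul (p : ℝ) {t : ℝ} (ht : 0 < t) {A : K →L[ℂ] K}
    (hA : A.IsPositive) :
    cfc (rpowIntegrand₀₁ p t) A = t ^ p • cfc (fun x : ℝ => t⁻¹ - (t + x)⁻¹) A :=
  cfc_const_mul _ _ A <| continuousOn_const.sub <|
    (continuousOn_const.add continuousOn_id).inv₀ fun _ hx => add_ne_zero_of_mem_spectrum hA ht hx

end Variational

section IntegralRepresentation

variable {A : Type*} [NormedRing A] [StarRing A] [NormedAlgebra ℝ A] [CompleteSpace A]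
  [PartialOrder A] [StarOrderedRing A] [ContinuousFunctionalCalculus ℝ A IsSelfAdjoint]
  [NonnegSpectrumClass ℝ A]

lemma cfc_rpow_eq_setIntegral_cfc_rpowIntegrand₀₁ {p : ℝ} (hp : p ∈ Ioo 0 1) {μ : Measure ℝ}
    (hμ : ∀ x ∈ Ici (0 : ℝ), IntegrableOn (fun t => rpowIntegrand₀₁ p t x) (Ioi 0) μ ∧
      x ^ p = ∫ t in Ioi 0, rpowIntegrand₀₁ p t x ∂μ)
    {a : A} (ha : 0 ≤ a) :
    IntegrableOn (fun t => cfc (rpowIntegrand₀₁ p t) a) (Ioi 0) μ ∧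
      cfc (fun x : ℝ => x ^ p) a = ∫ t in Ioi 0, cfc (rpowIntegrand₀₁ p t) a ∂μ := by
  have hspec : spectrum ℝ a ⊆ Ici 0 := fun x hx => spectrum_nonneg_of_nonneg ha hx
  set M := ‖a‖ * ‖(1 : A)‖
  have hM0 : 0 ≤ M := by positivity
  have hM : ∀ x ∈ spectrum ℝ a, x ≤ M := fun x hx =>
    (le_abs_self x).trans (spectrum.norm_le_norm_mul_of_mem hx)
  have hf := continuousOn_rpowIntegrand₀₁_uncurry hp _ hspec
  have hbound : ∀ᵐ t ∂μ.restrict (Ioi 0), ∀ x ∈ spectrum ℝ a,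
      ‖rpowIntegrand₀₁ p t x‖ ≤ rpowIntegrand₀₁ p t M := by
    filter_upwards [ae_restrict_mem measurableSet_Ioi] with t (ht : 0 < t) x hx
    rw [Real.norm_of_nonneg (rpowIntegrand₀₁_nonneg hp.1 ht.le (hspec hx))]
    exact rpowIntegrand₀₁_monotoneOn hp ht.le (hspec hx) hM0 (hM x hx)
  have hint := (hμ M hM0).1.2
  refine ⟨integrableOn_cfc measurableSet_Ioi _ _ a hf hbound hint, ?_⟩
  calc cfc (fun x : ℝ => x ^ p) a = cfc (fun x => ∫ t in Ioi 0, rpowIntegrand₀₁ p t x ∂μ) a :=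
        cfc_congr fun x hx => (hμ x (hspec hx)).2
    _ = _ := cfc_setIntegral measurableSet_Ioi _ _ a hf hbound hint

variable {K : Type*} [NormedAddCommGroup K] [InnerProductSpace ℂ K] [CompleteSpace K]

lemma re_inner_cfc_rpow_eq_setIntegral {p : ℝ} (hp : p ∈ Ioo 0 1) {μ : Measure ℝ}
    (hμ : ∀ x ∈ Ici (0 : ℝ), IntegrableOn (fun t => rpowIntegrand₀₁ p t x) (Ioi 0) μ ∧
      x ^ p = ∫ t in Ioi 0, rpowIntegrand₀₁ p t x ∂μ)
    {A : K →L[ℂ] K} (hA : A.IsPositive) (ζ : K) :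
    IntegrableOn (fun t => RCLike.re ⟪cfc (rpowIntegrand₀₁ p t) A ζ, ζ⟫_ℂ) (Ioi 0) μ ∧
      RCLike.re ⟪cfc (fun x : ℝ => x ^ p) A ζ, ζ⟫_ℂ =
        ∫ t in Ioi 0, RCLike.re ⟪cfc (rpowIntegrand₀₁ p t) A ζ, ζ⟫_ℂ ∂μ := by
  obtain ⟨hint, heq⟩ :=
    cfc_rpow_eq_setIntegral_cfc_rpowIntegrand₀₁ hp hμ (A.nonneg_iff_isPositive.mpr hA)
  let L : (K →L[ℂ] K) →L[ℝ] ℝ := RCLike.reCLM.comp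
    ((innerSL ℂ ζ).restrictScalars ℝ ∘L (ContinuousLinearMap.apply ℂ K ζ).restrictScalars ℝ)
  have hL : ∀ S, L S = RCLike.re ⟪S ζ, ζ⟫_ℂ := fun S => inner_re_symm (𝕜 := ℂ) ζ (S ζ)
  simp only [← hL]
  exact ⟨L.integrable_comp hint, by rw [heq, L.integral_comp_comm hint]⟩

end IntegralRepresentation

section Contraction

variable {H₁ H₂ : Type*} [NormedAddCommGroup H₁] [InnerProductSpace ℂ H₁] [CompleteSpace H₁]
  [NormedAddCommGroup H₂] [InnerProductSpace ℂ H₂] [CompleteSpace H₂]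
  {Δ₁ : H₁ →L[ℂ] H₁} {Δ₂ : H₂ →L[ℂ] H₂} {T : H₁ →L[ℂ] H₂}

lemma re_inner_cfc_inv_sub_inv_map_le (hΔ₁ : Δ₁.IsPositive) (hΔ₂ : Δ₂.IsPositive) (hT : ‖T‖ ≤ 1)
    (h : ∀ ξ, RCLike.re ⟪Δ₂ (T ξ), T ξ⟫_ℂ ≤ RCLike.re ⟪Δ₁ ξ, ξ⟫_ℂ) {t : ℝ} (ht : 0 < t) (ξ : H₁) :
    RCLike.re ⟪cfc (fun x : ℝ => t⁻¹ - (t + x)⁻¹) Δ₂ (T ξ), T ξ⟫_ℂ ≤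
      RCLike.re ⟪cfc (fun x : ℝ => t⁻¹ - (t + x)⁻¹) Δ₁ ξ, ξ⟫_ℂ := by
  obtain ⟨⟨η, hη⟩, -⟩ := isLeast_re_inner_cfc_inv_sub_inv hΔ₁ ht ξ
  have hle := (isLeast_re_inner_cfc_inv_sub_inv hΔ₂ ht (T ξ)).2 ⟨T η, rfl⟩
  have hTη : ‖T ξ - T η‖ ≤ ‖ξ - η‖ := by
    simpa [← map_sub] using T.le_of_opNorm_le hT (ξ - η)
  refine le_of_mul_le_mul_left ?_ (pow_pos ht 2)
  calc _ ≤ RCLike.re ⟪Δ₂ (T η), T η⟫_ℂ + t * ‖T ξ - T η‖ ^ 2 := hle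
    _ ≤ RCLike.re ⟪Δ₁ η, η⟫_ℂ + t * ‖ξ - η‖ ^ 2 := add_le_add (h η) (by gcongr)
    _ = _ := hη

lemma re_inner_cfc_rpow_map_le (hΔ₁ : Δ₁.IsPositive) (hΔ₂ : Δ₂.IsPositive) (hT : ‖T‖ ≤ 1)
    (h : ∀ ξ, RCLike.re ⟪Δ₂ (T ξ), T ξ⟫_ℂ ≤ RCLike.re ⟪Δ₁ ξ, ξ⟫_ℂ) {r : ℝ} (hr : r ∈ Ioo 0 1)
    (ξ : H₁) :
    RCLike.re ⟪cfc (fun x : ℝ => x ^ r) Δ₂ (T ξ), T ξ⟫_ℂ ≤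
      RCLike.re ⟪cfc (fun x : ℝ => x ^ r) Δ₁ ξ, ξ⟫_ℂ := by
  obtain ⟨μ, hμ⟩ := exists_measure_rpow_eq_integral_rpowIntegrand₀₁ hr
  obtain ⟨hint₂, heq₂⟩ := re_inner_cfc_rpow_eq_setIntegral hr hμ hΔ₂ (T ξ)
  obtain ⟨hint₁, heq₁⟩ := re_inner_cfc_rpow_eq_setIntegral hr hμ hΔ₁ ξ
  rw [heq₁, heq₂]
  refine setIntegral_mono_on hint₂ hint₁ measurableSet_Ioi fun t (ht : 0 < t) => ?_
  rw [cfc_rpowIntegrand₀₁_eq_smul r ht hΔ₂, cfc_rpowIntegrand₀₁_eq_smul r ht hΔ₁,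
    smul_apply, smul_apply, re_inner_real_smul_left, re_inner_real_smul_left]
  exact mul_le_mul_of_nonneg_left (re_inner_cfc_inv_sub_inv_map_le hΔ₁ hΔ₂ hT h ht ξ)
    (rpow_nonneg ht.le r)

end Contraction

/-- Löwner–Heinz with a contraction.  If `Δ₁, Δ₂` are positive operators
and `T` is a contraction with `T* Δ₂ T ≤ Δ₁` in the quadratic-form sense, then
`T* Δ₂^r T ≤ Δ₁^r` for all `0 ≤ r ≤ 1`. -/
theorem stmt1
    {H₁ H₂ : Type*} [NormedAddCommGroup H₁] [InnerProductSpace ℂ H₁] [CompleteSpace H₁]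
    [NormedAddCommGroup H₂] [InnerProductSpace ℂ H₂] [CompleteSpace H₂]
    (Δ₁ : H₁ →L[ℂ] H₁) (Δ₂ : H₂ →L[ℂ] H₂)
    (hΔ₁ : Δ₁.IsPositive) (hΔ₂ : Δ₂.IsPositive)
    (T : H₁ →L[ℂ] H₂) (hT : ‖T‖ ≤ 1)
    (h : ∀ ξ : H₁, RCLike.re ⟪Δ₂ (T ξ), T ξ⟫_ℂ ≤ RCLike.re ⟪Δ₁ ξ, ξ⟫_ℂ)
    (r : ℝ) (hr0 : 0 ≤ r) (hr1 : r ≤ 1) :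
    ∀ ξ : H₁,
      RCLike.re ⟪cfc (fun x : ℝ => x ^ r) Δ₂ (T ξ), T ξ⟫_ℂ ≤
      RCLike.re ⟪cfc (fun x : ℝ => x ^ r) Δ₁ ξ, ξ⟫_ℂ := by
  intro ξ
  obtain rfl | hr0 := hr0.eq_or_lt
  · simp only [rpow_zero]
    rw [cfc_const_one ℝ Δ₂ hΔ₂.isSelfAdjoint, cfc_const_one ℝ Δ₁ hΔ₁.isSelfAdjoint,
      one_apply_eq_self, one_apply_eq_self, inner_self_eq_norm_sq, inner_self_eq_norm_sq]
    gcongr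
    simpa using T.le_of_opNorm_le hT ξ
  obtain rfl | hr1 := hr1.eq_or_lt
  · simp only [rpow_one]
    rw [cfc_id' ℝ Δ₂ hΔ₂.isSelfAdjoint, cfc_id' ℝ Δ₁ hΔ₁.isSelfAdjoint]
    exact h ξ
  exact re_inner_cfc_rpow_map_le hΔ₁ hΔ₂ hT h ⟨hr0, hr1⟩ ξ
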